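/- Let U ⊆ ℝ_t × ℝ²_x be open, let h and v¹, v² be C² on U with h > 0, and suppose they solve the 2D rotating shallow water system B h = −h div v, B v¹ = v² − ∂₁h, B v² = −v¹ − ∂₂h on U. Set ρ = ln h, η = √h, ζ = (∂₁v² − ∂₂v¹) e^{−ρ}, and let g be the acoustical metric built from (η, v¹, v²) with wave operator □_g. Then ρ satisfies the covariant wave equation □_g ρ = 2 e^{−ρ} (∂₁v¹ ∂₂v² − ∂₂v¹ ∂₁v²) − ½ g^{αβ} ∂_α ρ ∂_β ρ + ζ on U. -/

import Mathlib

/-- Partial derivative in the `i`-th coordinate direction of spacetime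
`ℝ³ ≃ (Fin 3 → ℝ)`, coordinates `(x⁰, x¹, x²) = (t, x₁, x₂)`. -/
noncomputable def pd (i : Fin 3) (f : (Fin 3 → ℝ) → ℝ) (x : Fin 3 → ℝ) : ℝ :=
  fderiv ℝ f x (Pi.single i 1)

/-- Material derivative `B = ∂ₜ + v¹∂₁ + v²∂₂`. -/
noncomputable def matD (v1 v2 f : (Fin 3 → ℝ) → ℝ) (x : Fin 3 → ℝ) : ℝ :=
  pd 0 f x + v1 x * pd 1 f x + v2 x * pd 2 f x

/-- The acoustical metric field `g₀₀ = −η² + |v|²`, `g₀ᵢ = gᵢ₀ = −vⁱ`, `g_{ij} = δ_{ij}`. -/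
noncomputable def gMat (η v1 v2 : (Fin 3 → ℝ) → ℝ) (x : Fin 3 → ℝ) :
    Matrix (Fin 3) (Fin 3) ℝ :=
  !![-(η x) ^ 2 + (v1 x) ^ 2 + (v2 x) ^ 2, -(v1 x), -(v2 x);
     -(v1 x), 1, 0;
     -(v2 x), 0, 1]

/-- Pointwise inverse `g^{αβ}` of the acoustical metric. -/
noncomputable def gInv (η v1 v2 : (Fin 3 → ℝ) → ℝ) (x : Fin 3 → ℝ) :
    Matrix (Fin 3) (Fin 3) ℝ :=
  (gMat η v1 v2 x)⁻¹

/-- Christoffel symbols of the first kind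
`Γ_{αβγ} = ½(∂_α g_{βγ} + ∂_β g_{αγ} − ∂_γ g_{αβ})` of the acoustical metric. -/
noncomputable def Γfst (η v1 v2 : (Fin 3 → ℝ) → ℝ) (α β γ : Fin 3) (x : Fin 3 → ℝ) : ℝ :=
  (pd α (fun y => gMat η v1 v2 y β γ) x + pd β (fun y => gMat η v1 v2 y α γ) x
    - pd γ (fun y => gMat η v1 v2 y α β) x) / 2

/-- Christoffel symbols of the second kind `Γ^γ_{αβ} = g^{γδ} Γ_{αβδ}`. -/
noncomputable def Γsnd (η v1 v2 : (Fin 3 → ℝ) → ℝ) (γ α β : Fin 3) (x : Fin 3 → ℝ) : ℝ :=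
  ∑ d : Fin 3, gInv η v1 v2 x γ d * Γfst η v1 v2 α β d x

/-- Wave operator `□_g f = g^{αβ} ∂_α ∂_β f − g^{αβ} Γ^γ_{αβ} ∂_γ f` of the acoustical
metric. -/
noncomputable def box (η v1 v2 f : (Fin 3 → ℝ) → ℝ) (x : Fin 3 → ℝ) : ℝ :=
  (∑ α : Fin 3, ∑ β : Fin 3, gInv η v1 v2 x α β * pd α (pd β f) x)
    - ∑ α : Fin 3, ∑ β : Fin 3, ∑ γ : Fin 3,
        gInv η v1 v2 x α β * Γsnd η v1 v2 γ α β x * pd γ f x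

/-!
The acoustical metric has `det g = -η²`, so `□_g f = η⁻¹ ∂_α (η g^{αβ} ∂_β f)`; writing `c = η²`
this is `□_g f = -c⁻¹ (B²f + (div v - Bc / 2c) Bf) + Δf + ∇c·∇f / 2c`. For `ρ = ln h` the mass
equation reads `Bρ = -div v`. Commuting `B` with `∂ᵢ` gives `B(div v) = ∂ᵢ(Bvⁱ) - ∂ᵢvʲ ∂ⱼvⁱ`,
where `∂ᵢvʲ ∂ⱼvⁱ = (div v)² - 2 D₁₂(v¹, v²)` and, by the momentum equations,
`∂ᵢ(Bvⁱ) = -Δh + ∂₁v² - ∂₂v¹`; hence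
`B²ρ = Δh - (∂₁v² - ∂₂v¹) + (div v)² - 2 D₁₂(v¹, v²)`. Substituting into the formula for `□_g ρ`
with `c = h`, `Δρ = Δh / h - |∇ρ|²` and `g^{αβ}∂_αρ ∂_βρ = -(div v)² / h + |∇ρ|²` gives the claim.
-/

open Filter Topology

section PartialDerivatives

variable {f g : (Fin 3 → ℝ) → ℝ} {x : Fin 3 → ℝ} (i : Fin 3)

theorem Filter.EventuallyEq.pd_eq (hfg : f =ᶠ[𝓝 x] g) : pd i f x = pd i g x := by
  rw [pd, hfg.fderiv_eq, pd]

theorem pd_const (c : ℝ) : pd i (fun _ => c) x = 0 := by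
  simp [pd]

theorem pd_neg : pd i (fun y => -f y) x = -pd i f x := by
  simp [pd, fderiv_fun_neg]

theorem pd_add (hf : DifferentiableAt ℝ f x) (hg : DifferentiableAt ℝ g x) :
    pd i (fun y => f y + g y) x = pd i f x + pd i g x := by
  simp [pd, fderiv_fun_add hf hg]

theorem pd_sub (hf : DifferentiableAt ℝ f x) (hg : DifferentiableAt ℝ g x) :
    pd i (fun y => f y - g y) x = pd i f x - pd i g x := by
  simp [pd, fderiv_fun_sub hf hg]

theorem pd_mul (hf : DifferentiableAt ℝ f x) (hg : DifferentiableAt ℝ g x) :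
    pd i (fun y => f y * g y) x = f x * pd i g x + pd i f x * g x := by
  simp [pd, fderiv_fun_mul hf hg, mul_comm]

theorem pd_sq (hf : DifferentiableAt ℝ f x) : pd i (fun y => f y ^ 2) x = 2 * f x * pd i f x := by
  simp [pd, fderiv_fun_pow 2 hf]

theorem pd_inv (hf : DifferentiableAt ℝ f x) (hx : f x ≠ 0) :
    pd i (fun y => (f y)⁻¹) x = -pd i f x / f x ^ 2 := by
  have hinv : HasFDerivAt (fun y => (f y)⁻¹) ((-(f x ^ 2)⁻¹) • fderiv ℝ f x) x :=
    (hasDerivAt_inv hx).comp_hasFDerivAt x hf.hasFDerivAt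
  simp [pd, hinv.fderiv, div_eq_inv_mul]

theorem pd_log (hf : DifferentiableAt ℝ f x) (hx : f x ≠ 0) :
    pd i (fun y => Real.log (f y)) x = pd i f x / f x := by
  simp [pd, fderiv.log hf hx, div_eq_inv_mul]

theorem ContDiffAt.differentiableAt_pd (hf : ContDiffAt ℝ 2 f x) :
    DifferentiableAt ℝ (pd i f) x :=
  ((hf.fderiv_right (m := 1) le_rfl).differentiableAt one_ne_zero).clm_apply
    (differentiableAt_const _)

theorem pd_pd_eq_fderiv_fderiv (hf : ContDiffAt ℝ 2 f x) (j : Fin 3) :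
    pd i (pd j f) x = fderiv ℝ (fderiv ℝ f) x (Pi.single i 1) (Pi.single j 1) := by
  have hDf := (hf.fderiv_right (m := 1) le_rfl).differentiableAt one_ne_zero
  change fderiv ℝ (fun y => fderiv ℝ f y (Pi.single j 1)) x (Pi.single i 1) = _
  simp [fderiv_clm_apply hDf (differentiableAt_const _)]

theorem pd_pd_comm (hf : ContDiffAt ℝ 2 f x) (j : Fin 3) :
    pd i (pd j f) x = pd j (pd i f) x := by
  rw [pd_pd_eq_fderiv_fderiv i hf, pd_pd_eq_fderiv_fderiv j hf,
    hf.isSymmSndFDerivAt (by simp)]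

end PartialDerivatives

theorem pd_matD {v1 v2 f : (Fin 3 → ℝ) → ℝ} {x : Fin 3 → ℝ} (hv1 : DifferentiableAt ℝ v1 x)
    (hv2 : DifferentiableAt ℝ v2 x) (hf : ContDiffAt ℝ 2 f x) (i : Fin 3) :
    pd i (matD v1 v2 f) x
      = matD v1 v2 (pd i f) x + pd i v1 x * pd 1 f x + pd i v2 x * pd 2 f x := by
  have h0 := hf.differentiableAt_pd 0
  have h1 := hf.differentiableAt_pd 1
  have h2 := hf.differentiableAt_pd 2
  change pd i (fun y => pd 0 f y + v1 y * pd 1 f y + v2 y * pd 2 f y) x = _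
  rw [pd_add i (by fun_prop) (by fun_prop), pd_add i h0 (by fun_prop), pd_mul i hv1 h1,
    pd_mul i hv2 h2, pd_pd_comm i hf 0, pd_pd_comm i hf 1, pd_pd_comm i hf 2, matD]
  ring

section AcousticalMetric

variable {η v1 v2 : (Fin 3 → ℝ) → ℝ} {x : Fin 3 → ℝ}

theorem gInv_eq {c : ℝ} (hc : η x ^ 2 = c) (hc0 : c ≠ 0) :
    gInv η v1 v2 x =
      !![-c⁻¹, -v1 x / c, -v2 x / c;
         -v1 x / c, 1 - v1 x ^ 2 / c, -(v1 x * v2 x) / c;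
         -v2 x / c, -(v1 x * v2 x) / c, 1 - v2 x ^ 2 / c] := by
  apply Matrix.inv_eq_right_inv
  ext i j
  fin_cases i <;> fin_cases j <;>
    simp [gMat, Matrix.mul_apply, Fin.sum_univ_three, hc] <;> field_simp <;> ring

theorem sum_gInv_mul_pd_mul_pd {c : ℝ} (hc : η x ^ 2 = c) (hc0 : c ≠ 0) (f : (Fin 3 → ℝ) → ℝ) :
    ∑ α : Fin 3, ∑ β : Fin 3, gInv η v1 v2 x α β * pd α f x * pd β f x
      = -matD v1 v2 f x ^ 2 / c + pd 1 f x ^ 2 + pd 2 f x ^ 2 := by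
  simp only [gInv_eq hc hc0, Fin.sum_univ_three, matD, Matrix.of_apply, Matrix.cons_val',
    Matrix.cons_val_zero, Matrix.cons_val_one, Matrix.cons_val, Matrix.cons_val_fin_one]
  field_simp
  ring

theorem pd_gMat {c : (Fin 3 → ℝ) → ℝ} (hc : (fun y => η y ^ 2) =ᶠ[𝓝 x] c)
    (hcd : DifferentiableAt ℝ c x) (hv1 : DifferentiableAt ℝ v1 x)
    (hv2 : DifferentiableAt ℝ v2 x) (α β γ : Fin 3) :
    pd α (fun y => gMat η v1 v2 y β γ) x =
      !![-pd α c x + 2 * v1 x * pd α v1 x + 2 * v2 x * pd α v2 x, -pd α v1 x, -pd α v2 x;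
         -pd α v1 x, 0, 0;
         -pd α v2 x, 0, 0] β γ := by
  have h00 : pd α (fun y => -η y ^ 2 + v1 y ^ 2 + v2 y ^ 2) x
      = -pd α c x + 2 * v1 x * pd α v1 x + 2 * v2 x * pd α v2 x := by
    have hc' : (fun y => -η y ^ 2 + v1 y ^ 2 + v2 y ^ 2) =ᶠ[𝓝 x]
        fun y => -c y + v1 y ^ 2 + v2 y ^ 2 := by
      filter_upwards [hc] with y hy
      rw [← hy]
    rw [hc'.pd_eq, pd_add α (by fun_prop) (by fun_prop), pd_add α (by fun_prop) (by fun_prop),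
      pd_neg, pd_sq α hv1, pd_sq α hv2]
  fin_cases β <;> fin_cases γ <;> simp [gMat, pd_neg, pd_const, h00]

theorem box_eq_matD {c f : (Fin 3 → ℝ) → ℝ} (hc : (fun y => η y ^ 2) =ᶠ[𝓝 x] c) (hc0 : c x ≠ 0)
    (hcd : DifferentiableAt ℝ c x) (hv1 : DifferentiableAt ℝ v1 x)
    (hv2 : DifferentiableAt ℝ v2 x) (hf : ContDiffAt ℝ 2 f x) :
    box η v1 v2 f x =
      -(matD v1 v2 (matD v1 v2 f) x
          + (pd 1 v1 x + pd 2 v2 x - matD v1 v2 c x / (2 * c x)) * matD v1 v2 f x) / c x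
        + pd 1 (pd 1 f) x + pd 2 (pd 2 f) x
        + (pd 1 c x * pd 1 f x + pd 2 c x * pd 2 f x) / (2 * c x) := by
  simp only [box, Γsnd, Γfst, pd_gMat hc hcd hv1 hv2, gInv_eq hc.eq_of_nhds hc0,
    Fin.sum_univ_three, Matrix.of_apply, Matrix.cons_val', Matrix.cons_val_zero,
    Matrix.cons_val_one, Matrix.cons_val, Matrix.cons_val_fin_one]
  simp only [matD, pd_matD hv1 hv2 hf]
  rw [pd_pd_comm 1 hf 0, pd_pd_comm 2 hf 0, pd_pd_comm 2 hf 1]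
  field_simp
  ring

end AcousticalMetric

section LogHeight

variable {h : (Fin 3 → ℝ) → ℝ} {x : Fin 3 → ℝ}

theorem eventually_pd_log (hh : ContDiffAt ℝ 2 h x) (hx : h x ≠ 0) (i : Fin 3) :
    (pd i fun y => Real.log (h y)) =ᶠ[𝓝 x] fun y => pd i h y / h y := by
  filter_upwards [hh.eventually (by simp), hh.continuousAt.eventually_ne hx] with y hy hy0
  exact pd_log i (hy.differentiableAt two_ne_zero) hy0

theorem pd_pd_log (hh : ContDiffAt ℝ 2 h x) (hx : h x ≠ 0) (i j : Fin 3) :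
    pd i (pd j fun y => Real.log (h y)) x
      = pd i (pd j h) x / h x - pd i h x * pd j h x / h x ^ 2 := by
  have hd := hh.differentiableAt two_ne_zero
  rw [(eventually_pd_log hh hx j).pd_eq]
  simp only [div_eq_mul_inv]
  rw [pd_mul i (g := fun y => (h y)⁻¹) (hh.differentiableAt_pd j) (hd.inv hx), pd_inv i hd hx]
  field_simp
  ring

theorem matD_log {v1 v2 : (Fin 3 → ℝ) → ℝ} (hh : DifferentiableAt ℝ h x) (hx : h x ≠ 0) :
    matD v1 v2 (fun y => Real.log (h y)) x = matD v1 v2 h x / h x := by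
  simp only [matD, pd_log _ hh hx]
  ring

end LogHeight

section ShallowWater

variable {h v1 v2 : (Fin 3 → ℝ) → ℝ} {x : Fin 3 → ℝ}

theorem matD_divergence (hv1 : ContDiffAt ℝ 2 v1 x) (hv2 : ContDiffAt ℝ 2 v2 x) :
    matD v1 v2 (fun y => pd 1 v1 y + pd 2 v2 y) x
      = pd 1 (matD v1 v2 v1) x + pd 2 (matD v1 v2 v2) x
        - (pd 1 v1 x ^ 2 + 2 * pd 2 v1 x * pd 1 v2 x + pd 2 v2 x ^ 2) := by
  have hd1 := hv1.differentiableAt two_ne_zero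
  have hd2 := hv2.differentiableAt two_ne_zero
  rw [pd_matD hd1 hd2 hv1, pd_matD hd1 hd2 hv2]
  simp only [matD, pd_add _ (hv1.differentiableAt_pd 1) (hv2.differentiableAt_pd 2)]
  ring

theorem matD_matD_log (hh : ContDiffAt ℝ 2 h x) (hv1 : ContDiffAt ℝ 2 v1 x)
    (hv2 : ContDiffAt ℝ 2 v2 x) (hx : h x ≠ 0)
    (hmass : matD v1 v2 h =ᶠ[𝓝 x] fun y => -(h y) * (pd 1 v1 y + pd 2 v2 y))
    (hmom1 : matD v1 v2 v1 =ᶠ[𝓝 x] fun y => v2 y - pd 1 h y)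
    (hmom2 : matD v1 v2 v2 =ᶠ[𝓝 x] fun y => -v1 y - pd 2 h y) :
    matD v1 v2 (matD v1 v2 fun y => Real.log (h y)) x
      = pd 1 (pd 1 h) x + pd 2 (pd 2 h) x - (pd 1 v2 x - pd 2 v1 x)
        + (pd 1 v1 x + pd 2 v2 x) ^ 2
        - 2 * (pd 1 v1 x * pd 2 v2 x - pd 2 v1 x * pd 1 v2 x) := by
  have hBρ : (matD v1 v2 fun y => Real.log (h y)) =ᶠ[𝓝 x]
      fun y => -(pd 1 v1 y + pd 2 v2 y) := by
    filter_upwards [hh.eventually (by simp), hh.continuousAt.eventually_ne hx, hmass]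
      with y hy hy0 hmass_y
    rw [matD_log (hy.differentiableAt two_ne_zero) hy0, hmass_y]
    field_simp
  have hBBρ : matD v1 v2 (matD v1 v2 fun y => Real.log (h y)) x
      = -matD v1 v2 (fun y => pd 1 v1 y + pd 2 v2 y) x := by
    simp only [matD, hBρ.pd_eq, pd_neg]
    ring
  have hdivBv : pd 1 (matD v1 v2 v1) x + pd 2 (matD v1 v2 v2) x
      = pd 1 v2 x - pd 1 (pd 1 h) x - pd 2 v1 x - pd 2 (pd 2 h) x := by
    rw [hmom1.pd_eq, hmom2.pd_eq,
      pd_sub 1 (hv2.differentiableAt two_ne_zero) (hh.differentiableAt_pd 1),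
      pd_sub 2 (f := fun y => -v1 y) (hv1.differentiableAt two_ne_zero).neg
        (hh.differentiableAt_pd 2), pd_neg]
    ring
  rw [hBBρ, matD_divergence hv1 hv2, hdivBv]
  ring

end ShallowWater

/-- Covariant wave equation for `ρ = ln h` for solutions of the 2D rotating shallow water
system: `□_g ρ = 2e^{−ρ}(∂₁v¹∂₂v² − ∂₂v¹∂₁v²) − ½ g^{αβ}∂_αρ∂_βρ + ζ`, where the
acoustical metric is built from `η = √h` and `ζ = (∂₁v² − ∂₂v¹)e^{−ρ}`. -/
theorem covariant_wave_equation_log_height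
    (U : Set (Fin 3 → ℝ)) (hU : IsOpen U)
    (h v1 v2 : (Fin 3 → ℝ) → ℝ)
    (hh : ContDiffOn ℝ 2 h U)
    (hv1 : ContDiffOn ℝ 2 v1 U) (hv2 : ContDiffOn ℝ 2 v2 U)
    (hpos : ∀ x ∈ U, 0 < h x)
    (hmass : ∀ x ∈ U, matD v1 v2 h x = -(h x) * (pd 1 v1 x + pd 2 v2 x))
    (hmom1 : ∀ x ∈ U, matD v1 v2 v1 x = v2 x - pd 1 h x)
    (hmom2 : ∀ x ∈ U, matD v1 v2 v2 x = -v1 x - pd 2 h x) :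
    ∀ x ∈ U,
      box (fun y => Real.sqrt (h y)) v1 v2 (fun y => Real.log (h y)) x
        = 2 * Real.exp (-(Real.log (h x)))
            * (pd 1 v1 x * pd 2 v2 x - pd 2 v1 x * pd 1 v2 x)
          - (1 / 2) * ∑ α : Fin 3, ∑ β : Fin 3,
              gInv (fun y => Real.sqrt (h y)) v1 v2 x α β
                * pd α (fun y => Real.log (h y)) x * pd β (fun y => Real.log (h y)) x
          + (pd 1 v2 x - pd 2 v1 x) * Real.exp (-(Real.log (h x))) := by
  intro x hx
  have hxU : U ∈ 𝓝 x := hU.mem_nhds hx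
  have hhx : ContDiffAt ℝ 2 h x := hh.contDiffAt hxU
  have hv1x : ContDiffAt ℝ 2 v1 x := hv1.contDiffAt hxU
  have hv2x : ContDiffAt ℝ 2 v2 x := hv2.contDiffAt hxU
  have hdh : DifferentiableAt ℝ h x := hhx.differentiableAt two_ne_zero
  have hx0 : h x ≠ 0 := (hpos x hx).ne'
  have hη : (fun y => Real.sqrt (h y) ^ 2) =ᶠ[𝓝 x] h :=
    eventuallyEq_of_mem hxU fun y hy => Real.sq_sqrt (hpos y hy).le
  rw [box_eq_matD hη hx0 hdh (hv1x.differentiableAt two_ne_zero)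
      (hv2x.differentiableAt two_ne_zero) (hhx.log hx0),
    matD_matD_log hhx hv1x hv2x hx0 (eventuallyEq_of_mem hxU hmass)
      (eventuallyEq_of_mem hxU hmom1) (eventuallyEq_of_mem hxU hmom2),
    sum_gInv_mul_pd_mul_pd hη.eq_of_nhds hx0, matD_log hdh hx0, pd_pd_log hhx hx0,
    pd_pd_log hhx hx0, pd_log 1 hdh hx0, pd_log 2 hdh hx0, hmass x hx, Real.exp_neg,
    Real.exp_log (hpos x hx)]
  field_simp
  ring
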